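/- Let B, β, v, w, ρ, γ ≥ 0, μ > 0, and N₀ > 0. Every complex root of the characteristic polynomial of the 5×5 real matrix J_DFE has negative real part if and only if R₀ < 1, where R₀ = Bβ/(N₀(v+μ)(w+μ)). (This expresses Theorem 3.1: the disease-free equilibrium is locally asymptotically stable if and only if R₀ < 1.) -/

import Mathlib

/-!
Ordering the compartments as (R, V, I, S, A) makes the Jacobian at the disease-free
equilibrium upper triangular, so its eigenvalues are its diagonal entries
`-(v+μ)`, `Bβ/(N₀(v+μ)) - (w+μ)`, `-(ρ+γ+μ)`, `-μ`, `-μ`. All but the second are negative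
outright, and the second is negative exactly when `R₀ < 1`.
-/

open Polynomial

namespace Matrix

open Finset

variable {n α R : Type*} [Fintype n] [DecidableEq n] [LinearOrder α] {b : n → α}

theorem BlockTriangular.det_of_injective [CommRing R] {M : Matrix n n R}
    (h : M.BlockTriangular b) (hb : b.Injective) : M.det = ∏ i, M i i := by
  rw [h.det, prod_image fun i _ j _ hij => hb hij]
  refine prod_congr rfl fun i _ => ?_
  let : Unique {j // b j = b i} := ⟨⟨⟨i, rfl⟩⟩, fun j => Subtype.ext (hb j.2)⟩
  rw [det_unique]
  rfl

theorem BlockTriangular.charpoly_of_injective [CommRing R] {M : Matrix n n R}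
    (h : M.BlockTriangular b) (hb : b.Injective) : M.charpoly = ∏ i, (X - C (M i i)) := by
  rw [Matrix.charpoly, h.charmatrix.det_of_injective hb]
  simp only [charmatrix_apply_eq]

theorem BlockTriangular.isRoot_charpoly_map_iff {K : Type*} [CommRing R] [Field K] [Algebra R K]
    {M : Matrix n n R} (h : M.BlockTriangular b) (hb : b.Injective) (z : K) :
    (M.charpoly.map (algebraMap R K)).IsRoot z ↔ ∃ i, z = algebraMap R K (M i i) := by
  simp [h.charpoly_of_injective hb, Polynomial.map_prod, eval_prod, prod_eq_zero_iff, sub_eq_zero]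

theorem BlockTriangular.forall_isRoot_charpoly_re_neg_iff {M : Matrix n n ℝ}
    (h : M.BlockTriangular b) (hb : b.Injective) :
    (∀ z : ℂ, (M.charpoly.map (algebraMap ℝ ℂ)).IsRoot z → z.re < 0) ↔ ∀ i, M i i < 0 := by
  simp only [h.isRoot_charpoly_map_iff hb]
  simp

end Matrix

theorem DFE_stable_iff_R0_lt_one_general
    (B β v w ρ γ μ N₀ : ℝ) (hv : 0 ≤ v) (hw : 0 ≤ w)
    (hρ : 0 ≤ ρ) (hγ : 0 ≤ γ) (hμ : 0 < μ) :
    let J : Matrix (Fin 5) (Fin 5) ℝ :=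
      !![-(v + μ), -(B * β / (N₀ * (v + μ))), 0, 0, 0;
         0, B * β / (N₀ * (v + μ)) - (w + μ), 0, 0, 0;
         0, w, -(ρ + γ + μ), 0, 0;
         v, 0, 0, -μ, 0;
         0, 0, γ, 0, -μ]
    ((∀ z : ℂ, (J.charpoly.map (algebraMap ℝ ℂ)).IsRoot z → z.re < 0) ↔
      B * β / (N₀ * (v + μ) * (w + μ)) < 1) := by
  intro J
  have hJ : J.BlockTriangular ![3, 4, 2, 1, 0] := by
    intro i j hij
    fin_cases i <;> fin_cases j <;> simp_all [J]
  have hb : Function.Injective ![(3 : ℕ), 4, 2, 1, 0] := by decide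
  have hdiag : (∀ i, J i i < 0) ↔ B * β / (N₀ * (v + μ)) - (w + μ) < 0 := by
    simp only [Fin.forall_fin_succ, IsEmpty.forall_iff, and_true]
    simp [J, show -μ < v by linarith, show -γ < μ + ρ by linarith, hμ]
  have hR₀ : B * β / (N₀ * (v + μ) * (w + μ)) = B * β / (N₀ * (v + μ)) / (w + μ) :=
    (div_div _ _ _).symm
  rw [hJ.forall_isRoot_charpoly_re_neg_iff hb, hdiag, hR₀, div_lt_one (by positivity), sub_neg]

/-- **Theorem 3.1.** The disease-free equilibrium of the SAIVRD model is locally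
asymptotically stable iff `R₀ < 1`: every complex root of the characteristic
polynomial of the Jacobian `J_DFE` has negative real part iff
`R₀ = Bβ/(N₀(v+μ)(w+μ)) < 1`. -/
theorem DFE_stable_iff_R0_lt_one
    (B β v w ρ γ μ N₀ : ℝ) (hB : 0 ≤ B) (hβ : 0 ≤ β) (hv : 0 ≤ v) (hw : 0 ≤ w)
    (hρ : 0 ≤ ρ) (hγ : 0 ≤ γ) (hμ : 0 < μ) (hN₀ : 0 < N₀) :
    let J : Matrix (Fin 5) (Fin 5) ℝ :=
      !![-(v + μ), -(B * β / (N₀ * (v + μ))), 0, 0, 0;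
         0, B * β / (N₀ * (v + μ)) - (w + μ), 0, 0, 0;
         0, w, -(ρ + γ + μ), 0, 0;
         v, 0, 0, -μ, 0;
         0, 0, γ, 0, -μ]
    ((∀ z : ℂ, (J.charpoly.map (algebraMap ℝ ℂ)).IsRoot z → z.re < 0) ↔
      B * β / (N₀ * (v + μ) * (w + μ)) < 1) :=
  DFE_stable_iff_R0_lt_one_general B β v w ρ γ μ N₀ hv hw hρ hγ hμ
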